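/- The generalized μ-function satisfies μ(u,v;α) = e^{-πiα} μ(u+1, v; α) = e^{πiα} μ(u, v+1; α), where μ(u,v;α) := (e^{πiα(u-v)}/ϑ_{11}(v)) ∑_{n∈ℤ} (-1)^n e^{2πi(n+1/2)v} q^{n(n+1)/2} · (e^{2πiu} q^{n+1};q)_∞ / (e^{2πiu} q^{n-α+1};q)_∞. -/
import Mathlib


open Complex Real

/-- The infinite q-Pochhammer symbol `(a;q)_∞ = ∏_{j≥0} (1 - a q^j)`. -/
noncomputable def qPochInf (a q : ℂ) : ℂ := ∏' j : ℕ, (1 - a * q ^ j)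

/-- The Jacobi theta function
`ϑ_{11}(v;τ) = ∑_{n∈ℤ} e^{2πi(n+1/2)(v+1/2) + πi(n+1/2)²τ}`. -/
noncomputable def theta11 (τ v : ℂ) : ℂ :=
  ∑' n : ℤ, Complex.exp (2 * (π : ℂ) * I * ((n : ℂ) + 1/2) * (v + 1/2) +
    (π : ℂ) * I * ((n : ℂ) + 1/2) ^ 2 * τ)

/-- Complex powers of `q = e^{2πiτ}`: `q^s := e^{2πisτ}`. -/
noncomputable def qPow (τ s : ℂ) : ℂ := Complex.exp (2 * (π : ℂ) * I * s * τ)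

/-- The generalized μ-function
`μ(u,v;α) = (e^{πiα(u-v)}/ϑ_{11}(v)) ∑_{n∈ℤ} (-1)^n e^{2πi(n+1/2)v} q^{n(n+1)/2}
  (e^{2πiu}q^{n+1};q)_∞/(e^{2πiu}q^{n-α+1};q)_∞`. -/
noncomputable def genMu (τ α u v : ℂ) : ℂ :=
  Complex.exp ((π : ℂ) * I * α * (u - v)) / theta11 τ v *
    ∑' n : ℤ,
      (-1 : ℂ) ^ n * Complex.exp (2 * (π : ℂ) * I * ((n : ℂ) + 1/2) * v) *
        qPow τ ((n : ℂ) * ((n : ℂ) + 1) / 2) *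
        (qPochInf (Complex.exp (2 * (π : ℂ) * I * u) * qPow τ ((n : ℂ) + 1)) (qPow τ 1) /
          qPochInf (Complex.exp (2 * (π : ℂ) * I * u) * qPow τ ((n : ℂ) - α + 1)) (qPow τ 1))

/-- Pseudo-periodicity of the generalized μ-function:
`μ(u,v;α) = e^{-πiα} μ(u+1,v;α) = e^{πiα} μ(u,v+1;α)`. -/
theorem genMu_periodicity (τ α u v : ℂ) (hτ : 0 < τ.im)
    (hu : ∀ m n : ℤ, u - α * τ ≠ (m : ℂ) + (n : ℂ) * τ)
    (hv : ∀ m n : ℤ, v ≠ (m : ℂ) + (n : ℂ) * τ) :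
    genMu τ α u v = Complex.exp (-(π : ℂ) * I * α) * genMu τ α (u + 1) v ∧
      genMu τ α u v = Complex.exp ((π : ℂ) * I * α) * genMu τ α u (v + 1) := by
  have exp_shift : ∀ (n : ℤ) (w : ℂ),
      Complex.exp (w + 2 * (π : ℂ) * I * ((n : ℂ) + 1/2)) = -Complex.exp w := by
    intro n w
    have h : w + 2 * (π : ℂ) * I * ((n : ℂ) + 1/2)
        = w + ((n : ℂ) * (2 * π * I) + π * I) := by ring
    rw [h, Complex.exp_add, Complex.exp_add, Complex.exp_int_mul_two_pi_mul_I,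
      Complex.exp_pi_mul_I]
    ring
  have htheta : theta11 τ (v + 1) = -theta11 τ v := by
    rw [theta11, theta11, ← tsum_neg]
    apply tsum_congr
    intro n
    have h : 2 * (π : ℂ) * I * ((n : ℂ) + 1/2) * (v + 1 + 1/2) +
        (π : ℂ) * I * ((n : ℂ) + 1/2) ^ 2 * τ
        = (2 * (π : ℂ) * I * ((n : ℂ) + 1/2) * (v + 1/2) +
          (π : ℂ) * I * ((n : ℂ) + 1/2) ^ 2 * τ) + 2 * (π : ℂ) * I * ((n : ℂ) + 1/2) := by
      ring
    rw [h, exp_shift]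
  have hu1 : genMu τ α (u + 1) v = Complex.exp ((π : ℂ) * I * α) * genMu τ α u v := by
    rw [genMu, genMu]
    have he : Complex.exp (2 * (π : ℂ) * I * (u + 1)) = Complex.exp (2 * (π : ℂ) * I * u) := by
      have h : 2 * (π : ℂ) * I * (u + 1) = 2 * (π : ℂ) * I * u + (1 : ℤ) * (2 * π * I) := by
        push_cast; ring
      rw [h, Complex.exp_add, Complex.exp_int_mul_two_pi_mul_I, mul_one]
    rw [he]
    have hp : Complex.exp ((π : ℂ) * I * α * (u + 1 - v))
        = Complex.exp ((π : ℂ) * I * α) * Complex.exp ((π : ℂ) * I * α * (u - v)) := by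
      rw [← Complex.exp_add]; ring_nf
    rw [hp]
    ring
  have hv1 : genMu τ α u (v + 1) = Complex.exp (-(π : ℂ) * I * α) * genMu τ α u v := by
    rw [genMu, genMu, htheta]
    have hS : (∑' n : ℤ,
        (-1 : ℂ) ^ n * Complex.exp (2 * (π : ℂ) * I * ((n : ℂ) + 1/2) * (v + 1)) *
          qPow τ ((n : ℂ) * ((n : ℂ) + 1) / 2) *
          (qPochInf (Complex.exp (2 * (π : ℂ) * I * u) * qPow τ ((n : ℂ) + 1)) (qPow τ 1) /
            qPochInf (Complex.exp (2 * (π : ℂ) * I * u) * qPow τ ((n : ℂ) - α + 1)) (qPow τ 1)))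
        = -(∑' n : ℤ,
        (-1 : ℂ) ^ n * Complex.exp (2 * (π : ℂ) * I * ((n : ℂ) + 1/2) * v) *
          qPow τ ((n : ℂ) * ((n : ℂ) + 1) / 2) *
          (qPochInf (Complex.exp (2 * (π : ℂ) * I * u) * qPow τ ((n : ℂ) + 1)) (qPow τ 1) /
            qPochInf (Complex.exp (2 * (π : ℂ) * I * u) * qPow τ ((n : ℂ) - α + 1)) (qPow τ 1))) := by
      rw [← tsum_neg]
      apply tsum_congr
      intro n
      have h : 2 * (π : ℂ) * I * ((n : ℂ) + 1/2) * (v + 1)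
          = 2 * (π : ℂ) * I * ((n : ℂ) + 1/2) * v + 2 * (π : ℂ) * I * ((n : ℂ) + 1/2) := by
        ring
      rw [h, exp_shift]
      ring
    rw [hS]
    have hp : Complex.exp ((π : ℂ) * I * α * (u - (v + 1)))
        = Complex.exp (-(π : ℂ) * I * α) * Complex.exp ((π : ℂ) * I * α * (u - v)) := by
      rw [← Complex.exp_add]; ring_nf
    rw [hp]
    rw [div_neg, mul_neg]
    ring
  have hone : ∀ (a : ℂ), Complex.exp (-(π : ℂ) * I * α) * (Complex.exp ((π : ℂ) * I * α) * a) = a := by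
    intro a
    rw [← mul_assoc, ← Complex.exp_add]
    norm_num
  constructor
  · rw [hu1, hone]
  · rw [hv1, ← mul_assoc, ← Complex.exp_add]
    norm_num
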